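/- arXiv:2007.14566 — 2 statements merged into one kernel-verified Lean document; each statement's English description precedes it below -/
import Mathlib

section
/- Helstrom limit for binary discrimination of orthogonal-replacement channel outputs (Lemma 2): Let φ be a rank-one orthogonal projection (pure state) on ℂ^D and let ρ^⊥ be a density matrix on ℂ^D with φ·ρ^⊥ = 0. For q ∈ [0,1] set σ_q = q·ρ^⊥ + (1−q)·φ. Then for all q0, q1 ∈ [0,1] and u ≥ 1, the Helstrom error probability of the two equiprobable states σ_{q0}^{⊗u} and σ_{q1}^{⊗u} equals f_u(q0,q1). In particular, for u = 1, this equals (1 − |q0 − q1|)/2. -/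
open Matrix BigOperators Finset ComplexOrder

noncomputable section

/-- A density matrix: positive semidefinite with unit trace. -/
def IsDensityMatrix {ι : Type*} [Fintype ι] (ρ : Matrix ι ι ℂ) : Prop :=
  ρ.PosSemidef ∧ ρ.trace = 1

/-- The Helstrom minimum error probability for discriminating the states `ρ n`
with prior probabilities `p n`, optimized over all POVMs. -/
def helstrom {ι : Type*} [Fintype ι] [DecidableEq ι] {m : ℕ}
    (ρ : Fin m → Matrix ι ι ℂ) (p : Fin m → ℝ) : ℝ :=
  1 - sSup { x : ℝ | ∃ M : Fin m → Matrix ι ι ℂ,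
      (∀ n, (M n).PosSemidef) ∧ (∑ n, M n) = 1 ∧
      x = ∑ n, p n * ((M n * ρ n).trace).re }

open Classical in
/-- The positive semidefinite square root (junk value `0` off the PSD cone). -/
def psdSqrt {ι : Type*} [Fintype ι] [DecidableEq ι] (A : Matrix ι ι ℂ) : Matrix ι ι ℂ :=
  if h : A.PosSemidef then
    h.1.eigenvectorUnitary.1 * diagonal ((↑) ∘ (√·) ∘ h.1.eigenvalues) *
      (star h.1.eigenvectorUnitary : Matrix ι ι ℂ) else 0

/-- The trace norm `‖A‖₁ = tr √(Aᴴ A)`. -/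
def traceNorm {ι : Type*} [Fintype ι] [DecidableEq ι] (A : Matrix ι ι ℂ) : ℝ :=
  ((psdSqrt (Aᴴ * A)).trace).re

/-- The `u`-fold Kronecker (tensor) power of a square matrix. -/
def tensorPow {ι : Type*} (σ : Matrix ι ι ℂ) (u : ℕ) :
    Matrix (Fin u → ι) (Fin u → ι) ℂ :=
  fun i j => ∏ k, σ (i k) (j k)

/-- The binary error-probability function `f_u(q0,q1)`. -/
def fErr (u : ℕ) (q0 q1 : ℝ) : ℝ :=
  1/2 - (1/4) * ∑ k ∈ Finset.range (u+1),
    (u.choose k : ℝ) * |q0^k * (1-q0)^(u-k) - q1^k * (1-q1)^(u-k)|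

/-! Each copy of `σ_q = q • ρ + (1 - q) • φ` is `ρ` with probability `q` and `φ` otherwise, so
`σ_q^{⊗u} = ∑ₜ q^|t| (1 - q)^(u - |t|) • Pₜ`, where `Pₜ` has `ρ` on the copies in `t` and `φ` on
the others. Since `φ ρ = 0`, the projections `Qₜ` (`1 - φ` on the copies in `t`, `φ` on the others)
satisfy `tr (Qₛ Pₜ) = δₛₜ`, so the problem is classical: measuring `Q` reveals `t`, and guessing the
state of larger weight is optimal, because any POVM `(M₀, M₁)` splits each `Pₜ` into probabilities
`tr (M₀ Pₜ) + tr (M₁ Pₜ) = 1`. The optimal success probability is `½ ∑ₜ max (w₀ t) (w₁ t)`;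
writing `2 max a b = a + b + |a - b|` and grouping the `t` by cardinality gives `f_u`. -/

namespace Matrix

variable {κ ι : Type*} [Fintype κ] [DecidableEq κ]

def piKronecker {R : Type*} [CommMonoid R] (A : κ → Matrix ι ι R) :
    Matrix (κ → ι) (κ → ι) R :=
  fun i j => ∏ k, A k (i k) (j k)

section CommSemiring

variable {R : Type*} [CommSemiring R]

theorem piKronecker_mul [Fintype ι] (A B : κ → Matrix ι ι R) :
    piKronecker A * piKronecker B = piKronecker fun k => A k * B k := by
  ext i j
  simp only [piKronecker, mul_apply, Fintype.prod_sum, Finset.prod_mul_distrib]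

theorem trace_piKronecker [Fintype ι] (A : κ → Matrix ι ι R) :
    (piKronecker A).trace = ∏ k, (A k).trace := by
  simp only [trace, diag, piKronecker, Fintype.prod_sum]

omit [DecidableEq κ] in
theorem piKronecker_one [DecidableEq ι] :
    piKronecker (fun _ : κ => (1 : Matrix ι ι R)) = 1 := by
  ext i j
  simp only [piKronecker, one_apply, Fintype.prod_boole, funext_iff]

omit [DecidableEq κ] in
theorem piKronecker_smul (c : κ → R) (A : κ → Matrix ι ι R) :
    piKronecker (fun k => c k • A k) = (∏ k, c k) • piKronecker A := by
  ext i j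
  simp only [piKronecker, smul_apply, smul_eq_mul, Finset.prod_mul_distrib]

theorem piKronecker_add (A B : κ → Matrix ι ι R) :
    piKronecker (fun k => A k + B k)
      = ∑ t : Finset κ, piKronecker fun k => if k ∈ t then A k else B k := by
  ext i j
  simp only [piKronecker, add_apply, sum_apply, Fintype.prod_add]
  refine sum_congr rfl fun t _ => ?_
  rw [← prod_mul_prod_compl t]
  congr 1 <;> refine prod_congr rfl fun k hk => ?_
  · rw [if_pos hk]
  · rw [if_neg (mem_compl.mp hk)]

omit [DecidableEq κ] in
theorem conjTranspose_piKronecker [StarRing R] (A : κ → Matrix ι ι R) :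
    (piKronecker A)ᴴ = piKronecker fun k => (A k)ᴴ := by
  ext i j
  simp [piKronecker, conjTranspose_apply, star_prod]

end CommSemiring

section RCLike

open scoped MatrixOrder

variable {𝕜 : Type*} [RCLike 𝕜] [Fintype ι]

theorem PosSemidef.piKronecker {A : κ → Matrix ι ι 𝕜} (hA : ∀ k, (A k).PosSemidef) :
    (Matrix.piKronecker A).PosSemidef := by
  classical
  choose B hB using fun k => CStarAlgebra.nonneg_iff_eq_star_mul_self.mp (hA k).nonneg
  have : Matrix.piKronecker A = (Matrix.piKronecker B)ᴴ * Matrix.piKronecker B := by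
    rw [conjTranspose_piKronecker, piKronecker_mul]
    exact congrArg _ (funext hB)
  rw [this]
  exact posSemidef_conjTranspose_mul_self _

theorem isStarProjection_piKronecker {P : κ → Matrix ι ι 𝕜}
    (hP : ∀ k, IsStarProjection (P k)) : IsStarProjection (piKronecker P) where
  isIdempotentElem := by
    rw [IsIdempotentElem, piKronecker_mul]
    exact congrArg _ (funext fun k => (hP k).isIdempotentElem)
  isSelfAdjoint := by
    rw [IsSelfAdjoint, star_eq_conjTranspose, conjTranspose_piKronecker]
    exact congrArg _ (funext fun k => (hP k).isSelfAdjoint)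

omit [DecidableEq κ] in
theorem IsStarProjection.posSemidef {P : Matrix ι ι 𝕜} (hP : IsStarProjection P) :
    P.PosSemidef :=
  hP.nonneg.posSemidef

omit [DecidableEq κ] in
theorem PosSemidef.trace_mul_nonneg {A B : Matrix ι ι 𝕜} (hA : A.PosSemidef)
    (hB : B.PosSemidef) : 0 ≤ (A * B).trace := by
  classical
  obtain ⟨C, rfl⟩ := CStarAlgebra.nonneg_iff_eq_star_mul_self.mp hB.nonneg
  rw [← Matrix.mul_assoc, trace_mul_comm, ← Matrix.mul_assoc]
  exact (hA.mul_mul_conjTranspose_same C).trace_nonneg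

end RCLike

end Matrix

theorem tensorPow_eq_piKronecker {ι : Type*} (σ : Matrix ι ι ℂ) (u : ℕ) :
    tensorPow σ u = piKronecker fun _ => σ :=
  rfl

theorem tensorPow_smul_add_smul {ι : Type*} (a b : ℂ) (A B : Matrix ι ι ℂ) (u : ℕ) :
    tensorPow (a • A + b • B) u = ∑ t : Finset (Fin u),
      (a ^ #t * b ^ (u - #t)) • piKronecker fun k => if k ∈ t then A else B := by
  rw [tensorPow_eq_piKronecker, piKronecker_add]
  refine sum_congr rfl fun t _ => ?_
  have hcoef : ∀ k, (if k ∈ t then a • A else b • B)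
      = (if k ∈ t then a else b) • if k ∈ t then A else B := fun k => by split_ifs <;> rfl
  rw [funext hcoef, piKronecker_smul, prod_ite, prod_const, prod_const]
  simp [filter_notMem_eq_sdiff, card_sdiff]

theorem mul_add_mul_le_max {α : Type*} [Semiring α] [LinearOrder α] [IsOrderedRing α]
    (a b : α) {x y : α} (hx : 0 ≤ x) (hy : 0 ≤ y) (hxy : x + y = 1) :
    a * x + b * y ≤ max a b :=
  calc a * x + b * y ≤ max a b * x + max a b * y :=
        add_le_add (mul_le_mul_of_nonneg_right (le_max_left a b) hx)
          (mul_le_mul_of_nonneg_right (le_max_right a b) hy)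
    _ = max a b := by rw [← mul_add, hxy, mul_one]

section BinaryDiscrimination

variable {ι T : Type*} [Fintype ι] [DecidableEq ι] [Fintype T] [DecidableEq T]

omit [DecidableEq ι] [DecidableEq T] in
theorem re_trace_mul_sum_smul (M : Matrix ι ι ℂ) (P : T → Matrix ι ι ℂ) (c : T → ℝ) :
    ((M * ∑ t, (c t : ℂ) • P t).trace).re = ∑ t, c t * ((M * P t).trace).re := by
  simp only [Matrix.mul_sum, Matrix.mul_smul, trace_sum, trace_smul, Complex.re_sum, smul_eq_mul,
    Complex.re_ofReal_mul]

omit [DecidableEq T] in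
theorem re_trace_mul_sum_smul_le_sum_max {P : T → Matrix ι ι ℂ} (hP : ∀ t, (P t).PosSemidef)
    (hPtr : ∀ t, (P t).trace = 1) (a b : T → ℝ) (p₀ p₁ : ℝ) {M₀ M₁ : Matrix ι ι ℂ}
    (hM₀ : M₀.PosSemidef) (hM₁ : M₁.PosSemidef) (hM : M₀ + M₁ = 1) :
    p₀ * ((M₀ * ∑ t, (a t : ℂ) • P t).trace).re + p₁ * ((M₁ * ∑ t, (b t : ℂ) • P t).trace).re
      ≤ ∑ t, max (p₀ * a t) (p₁ * b t) := by
  rw [re_trace_mul_sum_smul, re_trace_mul_sum_smul, Finset.mul_sum, Finset.mul_sum,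
    ← sum_add_distrib]
  refine sum_le_sum fun t _ => ?_
  rw [← mul_assoc, ← mul_assoc]
  refine mul_add_mul_le_max _ _ ?_ ?_ ?_
  · exact (Complex.nonneg_iff.mp (hM₀.trace_mul_nonneg (hP t))).1
  · exact (Complex.nonneg_iff.mp (hM₁.trace_mul_nonneg (hP t))).1
  · rw [← Complex.add_re, ← trace_add, ← Matrix.add_mul, hM, Matrix.one_mul, hPtr, Complex.one_re]

omit [DecidableEq ι] [Fintype T] in
theorem trace_sum_mul_of_biorthogonal {P Q : T → Matrix ι ι ℂ}
    (hQP : ∀ s t, (Q s * P t).trace = if s = t then 1 else 0) (S : Finset T) (t : T) :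
    ((∑ s ∈ S, Q s) * P t).trace = if t ∈ S then 1 else 0 := by
  rw [Finset.sum_mul, trace_sum]
  simp only [hQP, sum_ite_eq']

theorem helstrom_pair_sum_smul_of_biorthogonal {P Q : T → Matrix ι ι ℂ}
    (hP : ∀ t, (P t).PosSemidef) (hPtr : ∀ t, (P t).trace = 1) (hQ : ∀ t, (Q t).PosSemidef)
    (hQsum : ∑ t, Q t = 1) (hQP : ∀ s t, (Q s * P t).trace = if s = t then 1 else 0)
    (a b : T → ℝ) (p : Fin 2 → ℝ) :
    helstrom ![∑ t, (a t : ℂ) • P t, ∑ t, (b t : ℂ) • P t] p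
      = 1 - ∑ t, max (p 0 * a t) (p 1 * b t) := by
  classical
  rw [helstrom]
  congr 1
  refine IsGreatest.csSup_eq ⟨?_, ?_⟩
  · let S := univ.filter fun t => p 1 * b t ≤ p 0 * a t
    refine ⟨![∑ t ∈ S, Q t, ∑ t ∈ Sᶜ, Q t], ?_, ?_, ?_⟩
    · intro n
      fin_cases n <;> exact posSemidef_sum _ fun t _ => hQ t
    · rw [Fin.sum_univ_two]
      exact (sum_add_sum_compl S Q).trans hQsum
    · simp only [Fin.sum_univ_two, cons_val_zero, cons_val_one]
      rw [re_trace_mul_sum_smul, re_trace_mul_sum_smul, Finset.mul_sum, Finset.mul_sum,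
        ← sum_add_distrib]
      refine sum_congr rfl fun t _ => ?_
      rw [trace_sum_mul_of_biorthogonal hQP, trace_sum_mul_of_biorthogonal hQP]
      by_cases ht : p 1 * b t ≤ p 0 * a t
      · simp [S, ht, not_lt.mpr ht]
      · simp [S, ht, lt_of_not_ge ht, le_of_not_ge ht]
  · rintro x ⟨M, hM, hMsum, rfl⟩
    rw [Fin.sum_univ_two] at hMsum ⊢
    exact re_trace_mul_sum_smul_le_sum_max hP hPtr a b _ _ (hM 0) (hM 1) hMsum

end BinaryDiscrimination

section Replacement

variable {κ ι : Type*} [Fintype κ] [DecidableEq κ]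

def replacedState (φ ρ : Matrix ι ι ℂ) (t : Finset κ) : Matrix (κ → ι) (κ → ι) ℂ :=
  piKronecker fun k => if k ∈ t then ρ else φ

def replacedProj [DecidableEq ι] (φ : Matrix ι ι ℂ) (t : Finset κ) :
    Matrix (κ → ι) (κ → ι) ℂ :=
  piKronecker fun k => if k ∈ t then 1 - φ else φ

theorem posSemidef_replacedState [Fintype ι] {φ ρ : Matrix ι ι ℂ} (hφ : φ.PosSemidef)
    (hρ : ρ.PosSemidef) (t : Finset κ) : (replacedState φ ρ t).PosSemidef :=
  PosSemidef.piKronecker fun k => by split_ifs <;> assumption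

theorem trace_replacedState [Fintype ι] {φ ρ : Matrix ι ι ℂ} (hφ : φ.trace = 1)
    (hρ : ρ.trace = 1) (t : Finset κ) : (replacedState φ ρ t).trace = 1 := by
  simp [replacedState, trace_piKronecker, apply_ite trace, hφ, hρ]

theorem posSemidef_replacedProj [Fintype ι] [DecidableEq ι] {φ : Matrix ι ι ℂ}
    (hφ : IsStarProjection φ) (t : Finset κ) : (replacedProj φ t).PosSemidef :=
  (isStarProjection_piKronecker fun k => by split_ifs; exacts [hφ.one_sub, hφ]).posSemidef

theorem sum_replacedProj [DecidableEq ι] (φ : Matrix ι ι ℂ) :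
    ∑ t : Finset κ, replacedProj φ t = 1 := by
  rw [← piKronecker_one, ← sub_add_cancel 1 φ]
  exact (piKronecker_add _ _).symm

theorem trace_replacedProj_mul_replacedState [Fintype ι] [DecidableEq ι] {φ ρ : Matrix ι ι ℂ}
    (hφ : IsStarProjection φ) (hφtr : φ.trace = 1) (hρtr : ρ.trace = 1) (horth : φ * ρ = 0)
    (s t : Finset κ) :
    (replacedProj φ s * replacedState φ ρ t).trace = if s = t then 1 else 0 := by
  have hfactor : ∀ k, ((if k ∈ s then 1 - φ else φ) * (if k ∈ t then ρ else φ)).trace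
      = if (k ∈ s ↔ k ∈ t) then 1 else 0 := by
    intro k
    by_cases hs : k ∈ s <;> by_cases ht : k ∈ t <;>
      simp [hs, ht, Matrix.sub_mul, horth, hφtr, hρtr, hφ.one_sub_mul_self, hφ.isIdempotentElem.eq]
  rw [replacedProj, replacedState, piKronecker_mul, trace_piKronecker]
  simp only [hfactor, Fintype.prod_boole, ← Finset.ext_iff]

end Replacement

theorem max_eq_add_add_abs_sub_div_two {α : Type*} [Field α] [LinearOrder α]
    [IsStrictOrderedRing α] (a b : α) : max a b = (a + b + |a - b|) / 2 := by
  linarith [min_add_max a b, max_sub_min_eq_abs a b, abs_sub_comm a b]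

theorem fErr_eq_one_sub_sum_max (u : ℕ) (q0 q1 : ℝ) :
    fErr u q0 q1 = 1 - ∑ t : Finset (Fin u),
      max (1 / 2 * (q0 ^ #t * (1 - q0) ^ (u - #t))) (1 / 2 * (q1 ^ #t * (1 - q1) ^ (u - #t))) := by
  have hsum : ∀ q : ℝ, ∑ t : Finset (Fin u), q ^ #t * (1 - q) ^ (u - #t) = 1 := fun q => by
    rw [Fin.sum_pow_mul_eq_add_pow, add_sub_cancel, one_pow]
  have hcard : ∑ t : Finset (Fin u),
        |q0 ^ #t * (1 - q0) ^ (u - #t) - q1 ^ #t * (1 - q1) ^ (u - #t)|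
      = ∑ k ∈ range (u + 1),
        (u.choose k : ℝ) * |q0 ^ k * (1 - q0) ^ (u - k) - q1 ^ k * (1 - q1) ^ (u - k)| := by
    rw [← powerset_univ, sum_powerset_apply_card
      (fun k => |q0 ^ k * (1 - q0) ^ (u - k) - q1 ^ k * (1 - q1) ^ (u - k)|)]
    simp
  simp only [← mul_max_of_nonneg _ _ (one_half_pos (α := ℝ)).le, max_eq_add_add_abs_sub_div_two,
    ← mul_sum, ← sum_div, sum_add_distrib, hsum, hcard, fErr]
  ring

theorem fErr_one (q0 q1 : ℝ) : fErr 1 q0 q1 = (1 - |q0 - q1|) / 2 := by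
  norm_num [fErr, sum_range_succ, abs_sub_comm q1 q0]
  ring

theorem tensorPow_eq_sum_replacedState {ι : Type*} (φ ρ : Matrix ι ι ℂ) (q : ℝ) (u : ℕ) :
    tensorPow ((q : ℂ) • ρ + ((1 - q : ℝ) : ℂ) • φ) u
      = ∑ t : Finset (Fin u), ((q ^ #t * (1 - q) ^ (u - #t) : ℝ) : ℂ) • replacedState φ ρ t := by
  rw [tensorPow_smul_add_smul]
  push_cast
  rfl

theorem helstrom_binary_orc_general {D : ℕ} (φ ρp : Matrix (Fin D) (Fin D) ℂ)
    (hherm : φᴴ = φ) (hproj : φ * φ = φ) (htr : φ.trace = 1)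
    (hρp : IsDensityMatrix ρp) (horth : φ * ρp = 0)
    (q0 q1 : ℝ)
    (u : ℕ) :
    helstrom ![tensorPow ((q0:ℂ) • ρp + (((1-q0 : ℝ)):ℂ) • φ) u,
               tensorPow ((q1:ℂ) • ρp + (((1-q1 : ℝ)):ℂ) • φ) u] ![1/2, 1/2]
        = fErr u q0 q1 ∧
    fErr 1 q0 q1 = (1 - |q0 - q1|) / 2 := by
  obtain ⟨hρpsd, hρtr⟩ := hρp
  have hφ : IsStarProjection φ := ⟨hproj, hherm⟩
  refine ⟨?_, fErr_one q0 q1⟩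
  rw [tensorPow_eq_sum_replacedState, tensorPow_eq_sum_replacedState,
    helstrom_pair_sum_smul_of_biorthogonal
      (posSemidef_replacedState hφ.posSemidef hρpsd) (trace_replacedState htr hρtr)
      (posSemidef_replacedProj hφ) (sum_replacedProj φ)
      (trace_replacedProj_mul_replacedState hφ htr hρtr horth),
    fErr_eq_one_sub_sum_max]
  simp only [cons_val_zero, cons_val_one]

/-- Helstrom limit for binary discrimination of orthogonal-replacement channel
outputs (Lemma 2), together with the one-shot special case. -/
theorem helstrom_binary_orc {D : ℕ} (φ ρp : Matrix (Fin D) (Fin D) ℂ)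
    (hherm : φᴴ = φ) (hproj : φ * φ = φ) (htr : φ.trace = 1)
    (hρp : IsDensityMatrix ρp) (horth : φ * ρp = 0)
    (q0 q1 : ℝ) (h0 : q0 ∈ Set.Icc (0:ℝ) 1) (h1 : q1 ∈ Set.Icc (0:ℝ) 1)
    (u : ℕ) (hu : 1 ≤ u) :
    helstrom ![tensorPow ((q0:ℂ) • ρp + (((1-q0 : ℝ)):ℂ) • φ) u,
               tensorPow ((q1:ℂ) • ρp + (((1-q1 : ℝ)):ℂ) • φ) u] ![1/2, 1/2]
        = fErr u q0 q1 ∧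
    fErr 1 q0 q1 = (1 - |q0 - q1|) / 2 :=
  helstrom_binary_orc_general φ ρp hherm hproj htr hρp horth q0 q1 u
end
end

section
/- Binary discrimination of depolarizing channels with a maximally entangled input (Proposition, non-adaptive content): Let d ≥ 2 and let ζ be the d²-dimensional maximally entangled pure state. For q ∈ [0,1] set ρ_q = q·(1/d²)·I_{d²} + (1−q)·ζ, a density matrix on ℂ^{d²}. Then for all q0, q1 ∈ [0,1] and u ≥ 1, the Helstrom error probability of the two equiprobable states ρ_{q0}^{⊗u} and ρ_{q1}^{⊗u} equals f_u((1 − d^{−2})·q0, (1 − d^{−2})·q1). -/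
open Matrix BigOperators Finset ComplexOrder

noncomputable section

/-- The `d²`-dimensional maximally entangled pure state. -/
def maxEnt (d : ℕ) : Matrix (Fin d × Fin d) (Fin d × Fin d) ℂ :=
  fun p q => if p.1 = p.2 ∧ q.1 = q.2 then (1/(d:ℂ)) else 0

/-- The Choi matrix of the depolarizing channel: output of a maximally entangled
input, `ρ_q = q (1/d²) I + (1−q) ζ`. -/
def depolChoi (d : ℕ) (q : ℝ) : Matrix (Fin d × Fin d) (Fin d × Fin d) ℂ :=
  (q:ℂ) • ((1/(d:ℂ)^2) • (1 : Matrix (Fin d × Fin d) (Fin d × Fin d) ℂ))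
    + (((1-q : ℝ)):ℂ) • maxEnt d

/-!
Write `p = (1 - d⁻²) q`. Since `ζ` is a rank-one projector, `ρ_q = (q/d²) I + (1 - q) ζ` is
diagonal in any orthonormal eigenbasis of `ζ`, with eigenvalue `1 - p` on the maximally entangled
vector and `q/d² = p/(d² - 1)` on the `d² - 1` others. So one unitary diagonalises both tensor
powers, and conjugating by it does not change the Helstrom error. For commuting states the
optimal measurement projects onto the indices where the first eigenvalue dominates, which gives
`1/2 - 1/4 ∑ |λ⁰ - λ¹|`. A product index with `k` factors off the entangled vector carries the
eigenvalue `p^k (1 - p)^(u - k) / (d² - 1)^k`, and there are `C(u,k) (d² - 1)^k` such indices.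
-/

section TensorPow

variable {ι : Type*}

lemma tensorPow_mul [Fintype ι] (A B : Matrix ι ι ℂ) (u : ℕ) :
    tensorPow (A * B) u = tensorPow A u * tensorPow B u := by
  ext i j
  simp only [tensorPow, mul_apply, prod_univ_sum, Fintype.piFinset_univ, prod_mul_distrib]

lemma tensorPow_conjTranspose (A : Matrix ι ι ℂ) (u : ℕ) :
    tensorPow Aᴴ u = (tensorPow A u)ᴴ := by
  ext i j
  simp only [tensorPow, conjTranspose_apply, star_prod]

variable [DecidableEq ι]

lemma tensorPow_diagonal (g : ι → ℂ) (u : ℕ) :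
    tensorPow (diagonal g) u = diagonal fun i : Fin u → ι => ∏ k, g (i k) := by
  ext i j
  by_cases h : i = j
  · subst h; simp [tensorPow]
  · obtain ⟨k, hk⟩ := Function.ne_iff.mp h
    simp [tensorPow, diagonal_apply_ne _ h, prod_eq_zero (mem_univ k), hk]

lemma tensorPow_one (u : ℕ) : tensorPow (1 : Matrix ι ι ℂ) u = 1 := by
  simpa using tensorPow_diagonal (fun _ => (1 : ℂ)) u

lemma tensorPow_mem_unitaryGroup [Fintype ι] {V : Matrix ι ι ℂ} (hV : V ∈ unitaryGroup ι ℂ)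
    (u : ℕ) :
    tensorPow V u ∈ unitaryGroup (Fin u → ι) ℂ := by
  rw [mem_unitaryGroup_iff, star_eq_conjTranspose, ← tensorPow_conjTranspose, ← tensorPow_mul,
    ← star_eq_conjTranspose, mem_unitaryGroup_iff.mp hV, tensorPow_one]

end TensorPow

section Helstrom

variable {ι : Type*} [Fintype ι] [DecidableEq ι] {m : ℕ}

def povmSuccessProbs (ρ : Fin m → Matrix ι ι ℂ) (p : Fin m → ℝ) : Set ℝ :=
  { x : ℝ | ∃ M : Fin m → Matrix ι ι ℂ, (∀ n, (M n).PosSemidef) ∧ (∑ n, M n) = 1 ∧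
      x = ∑ n, p n * ((M n * ρ n).trace).re }

lemma helstrom_eq_one_sub_sSup (ρ : Fin m → Matrix ι ι ℂ) (p : Fin m → ℝ) :
    helstrom ρ p = 1 - sSup (povmSuccessProbs ρ p) := rfl

lemma povmSuccessProbs_subset_conj {U : Matrix ι ι ℂ} (hU : U ∈ unitaryGroup ι ℂ)
    (ρ : Fin m → Matrix ι ι ℂ) (p : Fin m → ℝ) :
    povmSuccessProbs ρ p ⊆ povmSuccessProbs (fun n => U * ρ n * star U) p := by
  rintro x ⟨M, hM, hsum, rfl⟩
  have hUU : star U * U = 1 := mem_unitaryGroup_iff'.mp hU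
  refine ⟨fun n => U * M n * star U, fun n => (hM n).mul_mul_conjTranspose_same U, ?_, ?_⟩
  · rw [← sum_mul, ← mul_sum, hsum, mul_one, mem_unitaryGroup_iff.mp hU]
  · refine sum_congr rfl fun n _ => ?_
    have : U * M n * star U * (U * ρ n * star U) = U * (M n * ρ n) * star U := by
      simp only [Matrix.mul_assoc, ← Matrix.mul_assoc (star U) U, hUU, Matrix.one_mul]
    rw [this, trace_mul_cycle, hUU, Matrix.one_mul]

lemma helstrom_conj_unitary {U : Matrix ι ι ℂ} (hU : U ∈ unitaryGroup ι ℂ)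
    (ρ : Fin m → Matrix ι ι ℂ) (p : Fin m → ℝ) :
    helstrom (fun n => U * ρ n * star U) p = helstrom ρ p := by
  have hUU : star U * U = 1 := mem_unitaryGroup_iff'.mp hU
  have hback : povmSuccessProbs (fun n => U * ρ n * star U) p ⊆ povmSuccessProbs ρ p := by
    simpa only [star_star, Matrix.mul_assoc, hUU, Matrix.mul_one, ← Matrix.mul_assoc (star U) U,
      Matrix.one_mul] using
      povmSuccessProbs_subset_conj (Unitary.star_mem hU) (fun n => U * ρ n * star U) p
  rw [helstrom_eq_one_sub_sSup, helstrom_eq_one_sub_sSup,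
    (povmSuccessProbs_subset_conj hU ρ p).antisymm hback]

lemma re_trace_mul_diagonal_ofReal (M : Matrix ι ι ℂ) (g : ι → ℝ) :
    ((M * diagonal fun i => (g i : ℂ)).trace).re = ∑ i, (M i i).re * g i := by
  simp [trace, mul_diagonal, Complex.re_sum]

lemma isGreatest_povmSuccessProbs_diagonal (g₀ g₁ : ι → ℝ) (p₀ p₁ : ℝ) :
    IsGreatest (povmSuccessProbs ![diagonal fun i => (g₀ i : ℂ), diagonal fun i => (g₁ i : ℂ)]
      ![p₀, p₁]) (∑ i, max (p₀ * g₀ i) (p₁ * g₁ i)) := by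
  constructor
  · set t : ι → ℝ := fun i => if p₁ * g₁ i ≤ p₀ * g₀ i then 1 else 0
    refine ⟨![diagonal fun i => (t i : ℂ), diagonal fun i => ((1 - t i : ℝ) : ℂ)], ?_, ?_, ?_⟩
    · refine Fin.forall_fin_two.mpr ⟨?_, ?_⟩ <;>
        simp only [Matrix.cons_val_zero, Matrix.cons_val_one, posSemidef_diagonal_iff,
          Complex.zero_le_real] <;>
        intro i <;> simp only [t] <;> split_ifs <;> norm_num
    · simp [Fin.sum_univ_two, diagonal_add, ← diagonal_one]
    · simp only [Fin.sum_univ_two, Matrix.cons_val_zero, Matrix.cons_val_one,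
        re_trace_mul_diagonal_ofReal, mul_sum, ← sum_add_distrib]
      refine sum_congr rfl fun i _ => ?_
      simp only [diagonal_apply_eq, Complex.ofReal_re, t]
      split_ifs with h
      · rw [max_eq_left h]; ring
      · rw [max_eq_right (not_le.mp h).le]; ring
  · rintro x ⟨M, hM, hsum, rfl⟩
    simp only [Fin.sum_univ_two, Matrix.cons_val_zero, Matrix.cons_val_one,
      re_trace_mul_diagonal_ofReal, mul_sum, ← sum_add_distrib]
    refine sum_le_sum fun i _ => ?_
    have hsum_i : (M 0 i i).re + (M 1 i i).re = 1 := by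
      simpa [Fin.sum_univ_two] using congrArg (fun A : Matrix ι ι ℂ => (A i i).re) hsum
    calc _ = (M 0 i i).re * (p₀ * g₀ i) + (M 1 i i).re * (p₁ * g₁ i) := by ring
      _ ≤ _ := Convex.combo_le_max _ _ (Complex.nonneg_iff.mp (hM 0).diag_nonneg).1
          (Complex.nonneg_iff.mp (hM 1).diag_nonneg).1 hsum_i

lemma helstrom_diagonal (g₀ g₁ : ι → ℝ) (p₀ p₁ : ℝ) :
    helstrom ![diagonal fun i => (g₀ i : ℂ), diagonal fun i => (g₁ i : ℂ)] ![p₀, p₁] =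
      1 - ∑ i, max (p₀ * g₀ i) (p₁ * g₁ i) := by
  rw [helstrom_eq_one_sub_sSup, (isGreatest_povmSuccessProbs_diagonal g₀ g₁ p₀ p₁).csSup_eq]

lemma helstrom_diagonal_half {g₀ g₁ : ι → ℝ} (hg₀ : ∑ i, g₀ i = 1) (hg₁ : ∑ i, g₁ i = 1) :
    helstrom ![diagonal fun i => (g₀ i : ℂ), diagonal fun i => (g₁ i : ℂ)] ![1/2, 1/2] =
      1/2 - 1/4 * ∑ i, |g₀ i - g₁ i| := by
  have hmax (i : ι) :
      max (1/2 * g₀ i) (1/2 * g₁ i) = (g₀ i + g₁ i) / 4 + |g₀ i - g₁ i| / 4 := by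
    rcases le_total (g₀ i) (g₁ i) with h | h
    · rw [max_eq_right (by linarith), abs_of_nonpos (by linarith)]; ring
    · rw [max_eq_left (by linarith), abs_of_nonneg (by linarith)]; ring
  simp only [helstrom_diagonal, hmax, sum_add_distrib, ← sum_div, hg₀, hg₁]
  ring

end Helstrom

section Spectral

variable {κ : Type*} [Fintype κ] [DecidableEq κ]

lemma exists_eq_pi_single_of_mul_self_eq {e : κ → ℝ} (he : ∀ i, e i * e i = e i)
    (hsum : ∑ i, e i = 1) : ∃ i₀, e = Pi.single i₀ 1 := by
  have h01 (i : κ) : e i = 0 ∨ e i = 1 := by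
    have : e i * (e i - 1) = 0 := by rw [mul_sub, he, mul_one, sub_self]
    simpa [sub_eq_zero] using this
  have hcard : #{i | e i = 1} = 1 := by
    have : ∑ i, e i = #{i | e i = 1} := by
      rw [Finset.natCast_card_filter]
      exact sum_congr rfl fun i _ => by rcases h01 i with h | h <;> simp [h]
    exact_mod_cast this.symm.trans hsum
  obtain ⟨i₀, hi₀⟩ := card_eq_one.mp hcard
  have hone (i : κ) : e i = 1 ↔ i = i₀ := by simpa using Finset.ext_iff.mp hi₀ i
  refine ⟨i₀, funext fun i => ?_⟩
  rcases h01 i with h | h <;> simp [Pi.single_apply, ← hone, h]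

lemma Matrix.IsHermitian.exists_unitary_eq_conj_diagonal_single {P : Matrix κ κ ℂ}
    (hP : P.IsHermitian) (hPP : P * P = P) (htr : P.trace = 1) :
    ∃ V ∈ unitaryGroup κ ℂ, ∃ i₀, P = V * diagonal (Pi.single i₀ 1) * star V := by
  have hspec := hP.spectral_theorem
  set conj := Unitary.conjStarAlgAut ℂ (Matrix κ κ ℂ) hP.eigenvectorUnitary
  have hidem : ∀ i, hP.eigenvalues i * hP.eigenvalues i = hP.eigenvalues i := by
    rw [hspec, ← map_mul] at hPP
    intro i
    have h := congrFun (diagonal_injective ((diagonal_mul_diagonal _ _).symm.trans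
      (conj.injective hPP))) i
    rwa [Function.comp_apply, ← RCLike.ofReal_mul, RCLike.ofReal_inj] at h
  have htr' : ∑ i, hP.eigenvalues i = 1 := by
    have h := hP.trace_eq_sum_eigenvalues.symm.trans htr
    rwa [← RCLike.ofReal_sum, ← RCLike.ofReal_one, RCLike.ofReal_inj] at h
  obtain ⟨i₀, hi₀⟩ := exists_eq_pi_single_of_mul_self_eq hidem htr'
  refine ⟨_, hP.eigenvectorUnitary.2, i₀, ?_⟩
  conv_lhs => rw [hspec, Unitary.conjStarAlgAut_apply, hi₀]
  congr 3
  ext i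
  by_cases h : i = i₀ <;> simp [h]

end Spectral

section MaxEnt

variable {d : ℕ}

lemma maxEnt_isHermitian (d : ℕ) : (maxEnt d).IsHermitian := by
  ext ⟨i, i'⟩ ⟨j, j'⟩
  simp only [conjTranspose_apply, maxEnt, and_comm]
  split_ifs <;> simp

lemma maxEnt_trace (hd : d ≠ 0) : (maxEnt d).trace = 1 := by
  simp [trace, maxEnt, Fintype.sum_prod_type, hd]

lemma maxEnt_mul_self (hd : d ≠ 0) : maxEnt d * maxEnt d = maxEnt d := by
  ext ⟨i, i'⟩ ⟨j, j'⟩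
  by_cases h : i = i' ∧ j = j'
  · simp [mul_apply, maxEnt, Fintype.sum_prod_type, h, hd]
  · simp only [mul_apply, maxEnt, if_neg h]
    exact sum_eq_zero fun x _ => by split_ifs <;> simp_all

end MaxEnt

theorem sum_fun_card_filter_eq_sum_choose {ι κ M : Type*} [Fintype ι] [DecidableEq ι]
    [Fintype κ] [AddCommMonoid M] (P : κ → Prop) [DecidablePred P] (φ : ℕ → M) :
    ∑ i : ι → κ, φ #{k | P (i k)} =
      ∑ j ∈ range (Fintype.card ι + 1), ((Fintype.card ι).choose j * #{x | P x} ^ j *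
        #{x | ¬P x} ^ (Fintype.card ι - j)) • φ j := by
  have hfiber (S : Finset ι) : #{i : ι → κ | ({k | P (i k)} : Finset ι) = S} =
      #{x | P x} ^ #S * #{x | ¬P x} ^ (Fintype.card ι - #S) := by
    have : ({i : ι → κ | ({k | P (i k)} : Finset ι) = S} : Finset _) = Fintype.piFinset fun k =>
        if k ∈ S then ({x | P x} : Finset κ) else ({x | ¬P x} : Finset κ) := by
      ext i
      simp only [mem_filter, mem_univ, true_and, Fintype.mem_piFinset, Finset.ext_iff]
      refine forall_congr' fun k => ?_
      split_ifs with hk <;> simp [hk]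
    rw [this, Fintype.card_piFinset]
    have hcompl : ({k | k ∉ S} : Finset ι) = Sᶜ := by ext; simp
    simp only [apply_ite card, prod_ite, prod_const, filter_mem_eq_inter, univ_inter, hcompl,
      card_compl]
  calc ∑ i : ι → κ, φ #{k | P (i k)}
      = ∑ S : Finset ι, #{i : ι → κ | ({k | P (i k)} : Finset ι) = S} • φ #S := by
        rw [← Finset.sum_fiberwise' univ (fun i : ι → κ => ({k | P (i k)} : Finset ι))
          (fun S => φ #S)]
        simp
    _ = ∑ S ∈ (univ : Finset ι).powerset,
          (#{x | P x} ^ #S * #{x | ¬P x} ^ (Fintype.card ι - #S)) • φ #S := by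
        simp only [powerset_univ, hfiber]
    _ = _ := by
        rw [sum_powerset_apply_card
          (fun j => (#{x | P x} ^ j * #{x | ¬P x} ^ (Fintype.card ι - j)) • φ j), card_univ]
        simp only [smul_smul, mul_assoc]

section Depolarizing

variable {d : ℕ}

/-- The spectrum of `depolChoi d q` in an eigenbasis of `maxEnt d` whose `i₀`-th vector spans
its range. -/
def depolEigenvalues (d : ℕ) (i₀ : Fin d × Fin d) (q : ℝ) (i : Fin d × Fin d) : ℝ :=
  q / d ^ 2 + (1 - q) * (Pi.single i₀ 1 : Fin d × Fin d → ℝ) i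

lemma sum_depolEigenvalues (hd : d ≠ 0) (i₀ : Fin d × Fin d) (q : ℝ) :
    ∑ i, depolEigenvalues d i₀ q i = 1 := by
  simp [depolEigenvalues, sum_add_distrib, ← mul_sum]
  field_simp
  ring

lemma prod_depolEigenvalues {ι : Type*} [Fintype ι] (i₀ : Fin d × Fin d) (q : ℝ)
    (i : ι → Fin d × Fin d) :
    ∏ k, depolEigenvalues d i₀ q (i k) =
      (1 - (1 - 1 / d ^ 2) * q) ^ (Fintype.card ι - #{k | i k ≠ i₀}) *
        (q / d ^ 2) ^ #{k | i k ≠ i₀} := by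
  have hcard : #{k | ¬i k ≠ i₀} = Fintype.card ι - #{k | i k ≠ i₀} := by
    have := card_filter_add_card_filter_not (s := univ) (fun k => i k ≠ i₀)
    rw [card_univ] at this
    omega
  rw [← prod_filter_not_mul_prod_filter univ (fun k => i k ≠ i₀), ← hcard, ← prod_const,
    ← prod_const]
  congr 1 <;> refine prod_congr rfl fun k hk => ?_ <;> simp only [mem_filter] at hk
  · simp [depolEigenvalues, not_not.mp hk.2]
    ring
  · simp [depolEigenvalues, hk.2]

lemma depolChoi_eq_conj_diagonal {V : Matrix (Fin d × Fin d) (Fin d × Fin d) ℂ}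
    (hV : V ∈ unitaryGroup (Fin d × Fin d) ℂ) {i₀ : Fin d × Fin d}
    (hζ : maxEnt d = V * diagonal (Pi.single i₀ 1) * star V) (q : ℝ) :
    depolChoi d q = V * diagonal (fun i => (depolEigenvalues d i₀ q i : ℂ)) * star V := by
  have hdiag : diagonal (fun i => (depolEigenvalues d i₀ q i : ℂ)) =
      (q : ℂ) • ((1 / (d : ℂ) ^ 2) • 1) + ((1 - q : ℝ) : ℂ) • diagonal (Pi.single i₀ 1) := by
    ext i j
    by_cases h : i = j
    · subst h
      by_cases h₀ : i = i₀ <;> simp [depolEigenvalues, h₀] <;> ring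
    · simp [h]
  rw [hdiag, Matrix.mul_add, Matrix.add_mul, Matrix.mul_smul, Matrix.smul_mul, Matrix.mul_smul,
    Matrix.smul_mul, Matrix.mul_smul, Matrix.smul_mul, Matrix.mul_one, mem_unitaryGroup_iff.mp hV,
    ← hζ, depolChoi]

lemma tensorPow_depolChoi {V : Matrix (Fin d × Fin d) (Fin d × Fin d) ℂ}
    (hV : V ∈ unitaryGroup (Fin d × Fin d) ℂ) {i₀ : Fin d × Fin d}
    (hζ : maxEnt d = V * diagonal (Pi.single i₀ 1) * star V) (q : ℝ) (u : ℕ) :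
    tensorPow (depolChoi d q) u = tensorPow V u *
      diagonal (fun i => ((∏ k, depolEigenvalues d i₀ q (i k) : ℝ) : ℂ)) *
        star (tensorPow V u) := by
  simp only [depolChoi_eq_conj_diagonal hV hζ, tensorPow_mul, star_eq_conjTranspose,
    tensorPow_conjTranspose, tensorPow_diagonal, Complex.ofReal_prod]

lemma sum_prod_depolEigenvalues (hd : d ≠ 0) (i₀ : Fin d × Fin d) (q : ℝ) (u : ℕ) :
    ∑ i : Fin u → Fin d × Fin d, ∏ k, depolEigenvalues d i₀ q (i k) = 1 := by
  rw [← Fintype.prod_sum, sum_depolEigenvalues hd, prod_const_one]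

lemma sum_abs_sub_prod_depolEigenvalues (hd : d ≠ 0) (i₀ : Fin d × Fin d) (q₀ q₁ : ℝ)
    (u : ℕ) :
    ∑ i : Fin u → Fin d × Fin d,
        |∏ k, depolEigenvalues d i₀ q₀ (i k) - ∏ k, depolEigenvalues d i₀ q₁ (i k)| =
      ∑ j ∈ range (u + 1), (u.choose j : ℝ) *
        |((1 - 1 / d ^ 2) * q₀) ^ j * (1 - (1 - 1 / d ^ 2) * q₀) ^ (u - j) -
          ((1 - 1 / d ^ 2) * q₁) ^ j * (1 - (1 - 1 / d ^ 2) * q₁) ^ (u - j)| := by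
  set φ : ℕ → ℝ := fun j => |(1 - (1 - 1 / d ^ 2) * q₀) ^ (u - j) * (q₀ / d ^ 2) ^ j -
    (1 - (1 - 1 / d ^ 2) * q₁) ^ (u - j) * (q₁ / d ^ 2) ^ j|
  have hD : ((d * d - 1 : ℕ) : ℝ) = d ^ 2 - 1 := by
    rw [Nat.cast_sub (Nat.one_le_iff_ne_zero.mpr (by positivity))]
    push_cast
    ring
  have hD₀ : (0 : ℝ) ≤ d ^ 2 - 1 := hD ▸ Nat.cast_nonneg _
  have hterm (j : ℕ) (q : ℝ) : ((d : ℝ) ^ 2 - 1) ^ j *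
      ((1 - (1 - 1 / d ^ 2) * q) ^ (u - j) * (q / d ^ 2) ^ j) =
        ((1 - 1 / d ^ 2) * q) ^ j * (1 - (1 - 1 / d ^ 2) * q) ^ (u - j) := by
    have hp : ((d : ℝ) ^ 2 - 1) * (q / d ^ 2) = (1 - 1 / d ^ 2) * q := by field_simp
    rw [← hp, mul_pow]
    ring
  calc ∑ i : Fin u → Fin d × Fin d,
        |∏ k, depolEigenvalues d i₀ q₀ (i k) - ∏ k, depolEigenvalues d i₀ q₁ (i k)|
      = ∑ i : Fin u → Fin d × Fin d, φ #{k | i k ≠ i₀} := by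
        simp only [prod_depolEigenvalues, Fintype.card_fin, φ]
    _ = ∑ j ∈ range (u + 1), (u.choose j * (d * d - 1) ^ j * 1 ^ (u - j)) • φ j := by
        rw [sum_fun_card_filter_eq_sum_choose (· ≠ i₀) φ]
        simp [filter_ne', filter_eq']
    _ = _ := by
        refine sum_congr rfl fun j _ => ?_
        rw [nsmul_eq_mul, one_pow, mul_one, Nat.cast_mul, Nat.cast_pow, hD, mul_assoc,
          ← abs_of_nonneg (pow_nonneg hD₀ j), ← abs_mul, mul_sub, hterm j q₀, hterm j q₁]

end Depolarizing

theorem helstrom_binary_depolarizing_entangled_general (d : ℕ) (hd : 2 ≤ d)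
    (q0 q1 : ℝ) (u : ℕ) :
    helstrom ![tensorPow (depolChoi d q0) u, tensorPow (depolChoi d q1) u] ![1/2, 1/2]
      = fErr u ((1 - 1/(d:ℝ)^2) * q0) ((1 - 1/(d:ℝ)^2) * q1) := by
  have hd₀ : d ≠ 0 := by omega
  obtain ⟨V, hV, i₀, hζ⟩ := (maxEnt_isHermitian d).exists_unitary_eq_conj_diagonal_single
    (maxEnt_mul_self hd₀) (maxEnt_trace hd₀)
  have hstates : ![tensorPow (depolChoi d q0) u, tensorPow (depolChoi d q1) u] =
      fun n => tensorPow V u *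
        ![diagonal fun i => ((∏ k, depolEigenvalues d i₀ q0 (i k) : ℝ) : ℂ),
          diagonal fun i => ((∏ k, depolEigenvalues d i₀ q1 (i k) : ℝ) : ℂ)] n *
        star (tensorPow V u) := by
    ext n : 1
    fin_cases n <;> simp [tensorPow_depolChoi hV hζ]
  rw [hstates, helstrom_conj_unitary (tensorPow_mem_unitaryGroup hV u),
    helstrom_diagonal_half (sum_prod_depolEigenvalues hd₀ i₀ q0 u)
      (sum_prod_depolEigenvalues hd₀ i₀ q1 u),
    sum_abs_sub_prod_depolEigenvalues hd₀, fErr]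

/-- Binary discrimination of depolarizing channels with a maximally entangled input. -/
theorem helstrom_binary_depolarizing_entangled (d : ℕ) (hd : 2 ≤ d)
    (q0 q1 : ℝ) (h0 : q0 ∈ Set.Icc (0:ℝ) 1) (h1 : q1 ∈ Set.Icc (0:ℝ) 1)
    (u : ℕ) (hu : 1 ≤ u) :
    helstrom ![tensorPow (depolChoi d q0) u, tensorPow (depolChoi d q1) u] ![1/2, 1/2]
      = fErr u ((1 - 1/(d:ℝ)^2) * q0) ((1 - 1/(d:ℝ)^2) * q1) :=
  helstrom_binary_depolarizing_entangled_general d hd q0 q1 u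
end
end
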